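/- Let (Π, ξ) be a Jacobi structure on a Lie algebroid (A, ρ, [.,.]). Then L^ρ_ξ([α,β]_Π) − [L^ρ_ξα, β]_Π − [α, L^ρ_ξβ]_Π = L^ρ_{[ξ,♯_Π(α)] − ♯_Π(L^ρ_ξα)} β − L^ρ_{[ξ,♯_Π(β)] − ♯_Π(L^ρ_ξβ)} α − d_ρ(L^ρ_ξΠ(α,β)); in particular, since L^ρ_ξΠ = 0 implies [ξ,♯_Π(α)] = ♯_Π(L^ρ_ξα), the Lie derivative L^ρ_ξ is a derivation of the Koszul bracket. -/

import Mathlib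

/-- Algebraic model of a skew algebroid over a base manifold: `R` plays the role of
the ring of smooth functions, `G` the module of sections of the anchored bundle,
`bracket` the skew-symmetric bracket satisfying the Leibniz rule, and `anchor`
gives the action of sections on functions by derivations. -/
structure SkewAlgebroid (R : Type*) [CommRing R] (G : Type*)
    [AddCommGroup G] [Module R G] where
  bracket : G → G → G
  anchor : G → R → R
  bracket_add_left : ∀ a b c, bracket (a + b) c = bracket a c + bracket b c
  bracket_skew : ∀ a b, bracket a b = - bracket b a
  anchor_add : ∀ a b φ, anchor (a + b) φ = anchor a φ + anchor b φ
  anchor_smul : ∀ (φ : R) a ψ, anchor (φ • a) ψ = φ * anchor a ψ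
  anchor_map_add : ∀ a φ ψ, anchor a (φ + ψ) = anchor a φ + anchor a ψ
  anchor_map_mul : ∀ a φ ψ, anchor a (φ * ψ) = φ * anchor a ψ + ψ * anchor a φ
  leibniz : ∀ a (φ : R) b, bracket a (φ • b) = φ • bracket a b + anchor a φ • b

namespace SkewAlgebroid

variable {R : Type*} [CommRing R] {G : Type*} [AddCommGroup G] [Module R G]

/-- The bivector field associated to a sharp map `♯ : A* → A`: `Π(α,β) = β(♯α)`. -/
def biv (sharp : (G →ₗ[R] R) → G) (α β : G →ₗ[R] R) : R := β (sharp α)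

/-- `♯_{Π,ξ}(α) = ♯_Π(α) + α(ξ)ξ`. -/
def sharpJ (sharp : (G →ₗ[R] R) → G) (ξ : G) (α : G →ₗ[R] R) : G := sharp α + α ξ • ξ

/-- `(ξ ∧ Π)(α,β,γ)`. -/
def wedgeVB (ξ : G) (sharp : (G →ₗ[R] R) → G) (α β γ : G →ₗ[R] R) : R :=
  α ξ * biv sharp β γ - β ξ * biv sharp α γ + γ ξ * biv sharp α β

variable (S : SkewAlgebroid R G)

lemma bracket_add_right (a b c : G) :
    S.bracket a (b + c) = S.bracket a b + S.bracket a c := by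
  rw [S.bracket_skew a (b + c), S.bracket_add_left, S.bracket_skew b a, S.bracket_skew c a]
  abel

/-- The Lie `A`-derivative of a 1-form along a section. -/
def lieDeriv (a : G) (α : G →ₗ[R] R) : G →ₗ[R] R where
  toFun b := S.anchor a (α b) - α (S.bracket a b)
  map_add' b c := by
    rw [map_add, S.anchor_map_add, S.bracket_add_right, map_add]; ring
  map_smul' φ b := by
    rw [map_smul, smul_eq_mul, S.anchor_map_mul, S.leibniz, map_add, map_smul, map_smul,
      smul_eq_mul, smul_eq_mul, RingHom.id_apply, smul_eq_mul]
    ring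

/-- The exterior `A`-differential of a function, as a 1-form. -/
def dform (φ : R) : G →ₗ[R] R where
  toFun a := S.anchor a φ
  map_add' a b := S.anchor_add a b φ
  map_smul' c a := by rw [S.anchor_smul]; rfl

/-- The exterior `A`-differential of a 1-form. -/
def dOne (η : G →ₗ[R] R) (a b : G) : R :=
  S.anchor a (η b) - S.anchor b (η a) - η (S.bracket a b)

/-- The exterior `A`-differential of a 2-form. -/
def dTwo (Ω : G →ₗ[R] G →ₗ[R] R) (a b c : G) : R :=
  S.anchor a (Ω b c) - S.anchor b (Ω a c) + S.anchor c (Ω a b)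
    - Ω (S.bracket a b) c + Ω (S.bracket a c) b - Ω (S.bracket b c) a

/-- The Lie `A`-derivative of a 2-form along a section. -/
def lieTwo (ξ : G) (Ω : G →ₗ[R] G →ₗ[R] R) (a b : G) : R :=
  S.anchor ξ (Ω a b) - Ω (S.bracket ξ a) b - Ω a (S.bracket ξ b)

/-- The Koszul bracket of 1-forms associated with the bivector field given by `sharp`:
`[α,β]_Π = L_{♯α}β − L_{♯β}α − d_ρ(Π(α,β))`. -/
def koszul (sharp : (G →ₗ[R] R) → G) (α β : G →ₗ[R] R) : G →ₗ[R] R :=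
  S.lieDeriv (sharp α) β - S.lieDeriv (sharp β) α - S.dform (biv sharp α β)

/-- The Schouten–Nijenhuis bracket `[Π,Π]`, defined (as in the contravariant calculus)
by `[Π,Π] = −d_{ρ_Π}Π` via the structure `(ρ_Π, [.,.]_Π)` on the dual. -/
def schouten (sharp : (G →ₗ[R] R) → G) (α β γ : G →ₗ[R] R) : R :=
  -(S.anchor (sharp α) (biv sharp β γ) - S.anchor (sharp β) (biv sharp α γ)
      + S.anchor (sharp γ) (biv sharp α β)
      - biv sharp (S.koszul sharp α β) γ + biv sharp (S.koszul sharp α γ) β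
      - biv sharp (S.koszul sharp β γ) α)

/-- The Lie `A`-derivative `L^ρ_ξ Π` of the bivector field. -/
def lieBiv (ξ : G) (sharp : (G →ₗ[R] R) → G) (α β : G →ₗ[R] R) : R :=
  S.anchor ξ (biv sharp α β) - biv sharp (S.lieDeriv ξ α) β - biv sharp α (S.lieDeriv ξ β)

/-- The deformed dual bracket `[α,β]^λ_{Π,ξ}`. -/
def bracketJ (sharp : (G →ₗ[R] R) → G) (ξ : G) (lam : G →ₗ[R] R) (α β : G →ₗ[R] R) :
    G →ₗ[R] R :=
  S.koszul sharp α β + α ξ • (S.lieDeriv ξ β - β) - β ξ • (S.lieDeriv ξ α - α)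
    - biv sharp α β • lam

/-- The anchor is a bracket morphism (almost Lie algebroid condition). -/
def IsAlmostLie : Prop := ∀ a b φ,
  S.anchor (S.bracket a b) φ = S.anchor a (S.anchor b φ) - S.anchor b (S.anchor a φ)

/-- The Jacobi identity for the bracket (Lie algebroid condition). -/
def IsJacobi : Prop := ∀ a b c,
  S.bracket (S.bracket a b) c + S.bracket (S.bracket b c) a + S.bracket (S.bracket c a) b = 0

end SkewAlgebroid

open SkewAlgebroid

variable {R : Type*} [CommRing R] {G : Type*} [AddCommGroup G] [Module R G]

/-!
Since `L^ρ` is a representation of the Lie algebroid on 1-forms (`L_{[a,b]} = [L_a, L_b]`, by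
the Jacobi identity and the almost-Lie condition) and commutes with `d_ρ`, expanding
`L_ξ[α,β]_Π` term by term leaves exactly the defect of `♯_Π` and of `Π` under `L_ξ`. Pairing
with `β` shows `(L_ξΠ)(α,β) = β([ξ,♯α] − ♯(L_ξα))`, so when `L_ξΠ = 0` and 1-forms separate
sections, `♯` intertwines `L_ξ` with `[ξ, ·]` and the defect vanishes.
-/

namespace SkewAlgebroid

variable (S : SkewAlgebroid R G)

lemma anchor_map_zero (a : G) : S.anchor a 0 = 0 := by
  simpa using S.anchor_map_add a 0 0

lemma anchor_map_sub (a : G) (φ ψ : R) :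
    S.anchor a (φ - ψ) = S.anchor a φ - S.anchor a ψ := by
  rw [eq_sub_iff_add_eq, ← S.anchor_map_add, sub_add_cancel]

lemma anchor_sub (a b : G) (φ : R) :
    S.anchor (a - b) φ = S.anchor a φ - S.anchor b φ := by
  rw [eq_sub_iff_add_eq, ← S.anchor_add, sub_add_cancel]

lemma bracket_sub_left (a b c : G) :
    S.bracket (a - b) c = S.bracket a c - S.bracket b c := by
  rw [eq_sub_iff_add_eq, ← S.bracket_add_left, sub_add_cancel]

lemma bracket_zero_left (b : G) : S.bracket 0 b = 0 := by
  simpa using S.bracket_sub_left 0 0 b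

lemma bracket_neg_left (a b : G) : S.bracket (-a) b = -S.bracket a b := by
  simpa [bracket_zero_left] using S.bracket_sub_left 0 a b

lemma bracket_bracket_left (hJac : S.IsJacobi) (a b c : G) :
    S.bracket (S.bracket a b) c = S.bracket a (S.bracket b c) - S.bracket b (S.bracket a c) := by
  have h := hJac a b c
  rw [S.bracket_skew (S.bracket b c), S.bracket_skew c, S.bracket_neg_left,
    S.bracket_skew (S.bracket a c)] at h
  rw [← sub_eq_zero, ← h]
  abel

@[simp]
lemma lieDeriv_apply (a : G) (η : G →ₗ[R] R) (c : G) :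
    S.lieDeriv a η c = S.anchor a (η c) - η (S.bracket a c) := rfl

@[simp]
lemma dform_apply (φ : R) (c : G) : S.dform φ c = S.anchor c φ := rfl

lemma lieDeriv_sub_left (a b : G) (η : G →ₗ[R] R) :
    S.lieDeriv (a - b) η = S.lieDeriv a η - S.lieDeriv b η := by
  ext c
  simp only [lieDeriv_apply, LinearMap.sub_apply, anchor_sub, bracket_sub_left, map_sub]
  ring

lemma lieDeriv_zero_left (η : G →ₗ[R] R) : S.lieDeriv 0 η = 0 := by
  simpa using S.lieDeriv_sub_left 0 0 η

lemma lieDeriv_sub_right (a : G) (η θ : G →ₗ[R] R) :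
    S.lieDeriv a (η - θ) = S.lieDeriv a η - S.lieDeriv a θ := by
  ext c
  simp only [lieDeriv_apply, LinearMap.sub_apply, anchor_map_sub]
  ring

lemma dform_zero : S.dform 0 = 0 := by
  ext c
  exact S.anchor_map_zero c

lemma dform_sub (φ ψ : R) : S.dform (φ - ψ) = S.dform φ - S.dform ψ := by
  ext c
  exact S.anchor_map_sub c φ ψ

lemma lieDeriv_dform (hAL : S.IsAlmostLie) (a : G) (φ : R) :
    S.lieDeriv a (S.dform φ) = S.dform (S.anchor a φ) := by
  ext c
  simp only [lieDeriv_apply, dform_apply, hAL a c φ]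
  ring

lemma lieDeriv_bracket (hJac : S.IsJacobi) (hAL : S.IsAlmostLie) (a b : G) (η : G →ₗ[R] R) :
    S.lieDeriv (S.bracket a b) η
      = S.lieDeriv a (S.lieDeriv b η) - S.lieDeriv b (S.lieDeriv a η) := by
  ext c
  simp only [lieDeriv_apply, LinearMap.sub_apply, anchor_map_sub, hAL a b,
    S.bracket_bracket_left hJac, map_sub]
  ring

lemma lieBiv_eq_apply_sub (sharp : (G →ₗ[R] R) → G) (ξ : G) (α β : G →ₗ[R] R) :
    S.lieBiv ξ sharp α β = β (S.bracket ξ (sharp α) - sharp (S.lieDeriv ξ α)) := by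
  simp only [lieBiv, biv, lieDeriv_apply, map_sub]
  ring

lemma lieDeriv_koszul (hJac : S.IsJacobi) (hAL : S.IsAlmostLie) (sharp : (G →ₗ[R] R) → G)
    (ξ : G) (α β : G →ₗ[R] R) :
    S.lieDeriv ξ (S.koszul sharp α β) - S.koszul sharp (S.lieDeriv ξ α) β
        - S.koszul sharp α (S.lieDeriv ξ β)
      = S.lieDeriv (S.bracket ξ (sharp α) - sharp (S.lieDeriv ξ α)) β
        - S.lieDeriv (S.bracket ξ (sharp β) - sharp (S.lieDeriv ξ β)) α
        - S.dform (S.lieBiv ξ sharp α β) := by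
  simp only [koszul, lieBiv, lieDeriv_sub_right, lieDeriv_sub_left, lieDeriv_dform S hAL,
    lieDeriv_bracket S hJac hAL, dform_sub]
  abel

lemma sharp_lieDeriv (hsep : ∀ v : G, (∀ β : G →ₗ[R] R, β v = 0) → v = 0)
    (sharp : (G →ₗ[R] R) → G) (ξ : G) (α : G →ₗ[R] R)
    (hα : ∀ β : G →ₗ[R] R, S.lieBiv ξ sharp α β = 0) :
    sharp (S.lieDeriv ξ α) = S.bracket ξ (sharp α) :=
  (sub_eq_zero.mp <| hsep _ fun β =>
    (S.lieBiv_eq_apply_sub sharp ξ α β).symm.trans (hα β)).symm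

end SkewAlgebroid

theorem lieDeriv_derivation_of_koszul_general
    (S : SkewAlgebroid R G) (hJac : S.IsJacobi) (hAL : S.IsAlmostLie)
    (hsep : ∀ v : G, (∀ β : G →ₗ[R] R, β v = 0) → v = 0)
    (sharp : (G →ₗ[R] R) → G)
    (ξ : G)
    (hJ2 : ∀ α β : G →ₗ[R] R, S.lieBiv ξ sharp α β = 0) :
    (∀ α β : G →ₗ[R] R,
        S.lieDeriv ξ (S.koszul sharp α β) - S.koszul sharp (S.lieDeriv ξ α) β
            - S.koszul sharp α (S.lieDeriv ξ β)
          = S.lieDeriv (S.bracket ξ (sharp α) - sharp (S.lieDeriv ξ α)) β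
            - S.lieDeriv (S.bracket ξ (sharp β) - sharp (S.lieDeriv ξ β)) α
            - S.dform (S.lieBiv ξ sharp α β))
    ∧ (∀ α β : G →ₗ[R] R,
        S.lieDeriv ξ (S.koszul sharp α β)
          = S.koszul sharp (S.lieDeriv ξ α) β + S.koszul sharp α (S.lieDeriv ξ β)) := by
  refine ⟨S.lieDeriv_koszul hJac hAL sharp ξ, fun α β => ?_⟩
  have h := S.lieDeriv_koszul hJac hAL sharp ξ α β
  simp only [S.sharp_lieDeriv hsep sharp ξ _ (hJ2 _), hJ2, sub_self, lieDeriv_zero_left,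
    dform_zero] at h
  rwa [sub_sub, sub_eq_zero] at h

/-- for a Jacobi structure `(Π,ξ)` on a Lie algebroid,
`L_ξ[α,β]_Π − [L_ξα,β]_Π − [α,L_ξβ]_Π
   = L_{[ξ,♯α]−♯(L_ξα)}β − L_{[ξ,♯β]−♯(L_ξβ)}α − d_ρ(L_ξΠ(α,β))`;
in particular (since `L_ξΠ = 0` forces `[ξ,♯α] = ♯(L_ξα)`) the Lie derivative `L_ξ`
is a derivation of the Koszul bracket. -/
theorem lieDeriv_derivation_of_koszul
    (S : SkewAlgebroid R G) (hJac : S.IsJacobi) (hAL : S.IsAlmostLie)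
    (hsep : ∀ v : G, (∀ β : G →ₗ[R] R, β v = 0) → v = 0)
    (sharp : (G →ₗ[R] R) → G)
    (hskew : ∀ α β : G →ₗ[R] R, α (sharp β) = - β (sharp α))
    (ξ : G)
    (hJ1 : ∀ α β γ : G →ₗ[R] R, S.schouten sharp α β γ = 2 * wedgeVB ξ sharp α β γ)
    (hJ2 : ∀ α β : G →ₗ[R] R, S.lieBiv ξ sharp α β = 0) :
    (∀ α β : G →ₗ[R] R,
        S.lieDeriv ξ (S.koszul sharp α β) - S.koszul sharp (S.lieDeriv ξ α) β
            - S.koszul sharp α (S.lieDeriv ξ β)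
          = S.lieDeriv (S.bracket ξ (sharp α) - sharp (S.lieDeriv ξ α)) β
            - S.lieDeriv (S.bracket ξ (sharp β) - sharp (S.lieDeriv ξ β)) α
            - S.dform (S.lieBiv ξ sharp α β))
    ∧ (∀ α β : G →ₗ[R] R,
        S.lieDeriv ξ (S.koszul sharp α β)
          = S.koszul sharp (S.lieDeriv ξ α) β + S.koszul sharp α (S.lieDeriv ξ β)) :=
  lieDeriv_derivation_of_koszul_general S hJac hAL hsep sharp ξ hJ2
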